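/- If \(\mathbf{v}_1,\dots,\mathbf{v}_{N_1} \in \mathbb{C}^M\) are i.i.d. with \(\mathbf{v}_n \sim \mathcal{CN}(\mathbf{0}, \sigma_v^2 \mathbf{I}_M)\), then \(\mathbb{E}[\max_{1\le n\le N_1} \|\mathbf{v}_n\|^2] = \sigma_v^2 G(N_1, M)\), where \(G(N_1,M) = \sum_{n=1}^{N_1} \binom{N_1}{n}(-1)^{n+1} c_n\) with \(c_n = \sum_{k_0+\cdots+k_{M-1}=n} \binom{n}{k_0,\dots,k_{M-1}} \left(\prod_{m=0}^{M-1}\frac{1}{(m!)^{k_m}}\right) \frac{(\sum_m m k_m)!}{n^{1+\sum_m m k_m}}\). -/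

import Mathlib

/-!
The density of `CN(0, σ² I_M)` is radial, so in polar coordinates its mass on a ball is a
one-dimensional integral, which shows that `‖v‖² / σ²` has the Erlang law of shape `M`:
`P(‖v‖² ≤ t) = 1 - S(t / σ²)` with `S(τ) = e^{-τ} ∑_{m<M} τ^m / m!`. By independence
`P(max_n ‖v_n‖² ≤ t) = (1 - S(t / σ²))^{N₁}`, and the layer-cake formula gives
`E[max_n ‖v_n‖²] = σ² ∫₀^∞ (1 - (1 - S(τ))^{N₁}) dτ`. Expanding binomially in `S`, then `S^n`
multinomially, leaves the Gamma integrals `∫₀^∞ τ^k e^{-nτ} dτ = k! / n^{k+1}`, which assemble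
into the coefficients `c_n`.
-/

open MeasureTheory ProbabilityTheory Finset

noncomputable section

instance euclideanComplexMeasurableSpace {M : ℕ} :
    MeasurableSpace (EuclideanSpace ℂ (Fin M)) := WithLp.measurableSpace 2 _

instance euclideanComplexBorelSpace {M : ℕ} :
    BorelSpace (EuclideanSpace ℂ (Fin M)) := PiLp.borelSpace 2

instance euclideanComplexMeasureSpace {M : ℕ} :
    MeasureSpace (EuclideanSpace ℂ (Fin M)) := ⟨(Measure.pi fun _ : Fin M => (volume : Measure ℂ)).map (WithLp.toLp 2)⟩

/-- The circularly symmetric complex Gaussian distribution `CN(0, σ² I_M)` on `ℂ^M`,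
given by the density `v ↦ (π σ²)^{-M} exp(-‖v‖²/σ²)` w.r.t. Lebesgue measure. -/
def cscg (M : ℕ) (σ2 : ℝ) : Measure (EuclideanSpace ℂ (Fin M)) :=
  volume.withDensity fun v =>
    ENNReal.ofReal (((Real.pi * σ2) ^ M)⁻¹ * Real.exp (-‖v‖ ^ 2 / σ2))

/-- The coefficient `c_n` from the multinomial expansion. -/
def ccoef (M n : ℕ) : ℝ :=
  ∑ k ∈ Finset.Nat.antidiagonalTuple M n,
    (Nat.multinomial Finset.univ k : ℝ) *
      (∏ m : Fin M, (1 : ℝ) / ((m : ℕ).factorial ^ k m : ℕ)) *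
      (((∑ m : Fin M, (m : ℕ) * k m).factorial : ℝ) /
        (n : ℝ) ^ (1 + ∑ m : Fin M, (m : ℕ) * k m))

/-- `G(N₁, M) = ∑_{n=1}^{N₁} C(N₁,n) (-1)^{n+1} c_n`. -/
def Gfun (N1 M : ℕ) : ℝ :=
  ∑ n ∈ Finset.Icc 1 N1, (N1.choose n : ℝ) * (-1 : ℝ) ^ (n + 1) * ccoef M n

instance euclideanComplexHaar {M : ℕ} :
    Measure.IsAddHaarMeasure (volume : Measure (EuclideanSpace ℂ (Fin M))) :=
  (PiLp.continuousLinearEquiv 2 ℝ (fun _ : Fin M => ℂ)).symm.isAddHaarMeasure_map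
    (Measure.pi fun _ : Fin M => (volume : Measure ℂ))

lemma finrank_real_euclideanSpace_complex (ι : Type*) [Fintype ι] :
    Module.finrank ℝ (EuclideanSpace ℂ ι) = 2 * Fintype.card ι := by
  rw [(WithLp.linearEquiv 2 ℝ (ι → ℂ)).finrank_eq, Module.finrank_pi_fintype,
    Complex.finrank_real_complex, Finset.sum_const, smul_eq_mul, mul_comm, Finset.card_univ]

lemma volume_ball_euclideanSpace_complex (M : ℕ) [NeZero M] :
    volume (Metric.ball (0 : EuclideanSpace ℂ (Fin M)) 1) =
      ENNReal.ofReal (Real.pi ^ M / M.factorial) := by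
  change Measure.map (WithLp.toLp 2) (Measure.pi fun _ => volume) _ = _
  rw [Measure.map_apply (WithLp.measurable_toLp 2 _) Metric.isOpen_ball.measurableSet]
  convert Complex.volume_sum_rpow_lt (ι := Fin M) one_le_two 1 using 2
  · rfl
  · ext x
    simp [EuclideanSpace.norm_eq, Real.sqrt_eq_rpow]
  rw [Fintype.card_fin, ENNReal.ofReal_one, one_pow, one_mul]
  norm_num [Real.Gamma_two, Real.Gamma_nat_eq_factorial]

section Polar

variable {E : Type*} [NormedAddCommGroup E] [NormedSpace ℝ E] [FiniteDimensional ℝ E]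
  [MeasurableSpace E] [BorelSpace E] [Nontrivial E] (μ : Measure E) [μ.IsAddHaarMeasure]

lemma lintegral_fun_norm_addHaar {f : ℝ → ENNReal} (hf : Measurable f) :
    ∫⁻ x, f ‖x‖ ∂μ = Module.finrank ℝ E * μ (Metric.ball 0 1) *
      ∫⁻ y in Set.Ioi (0 : ℝ), ENNReal.ofReal (y ^ (Module.finrank ℝ E - 1)) * f y := by
  have hf' : Measurable fun p : Metric.sphere (0 : E) 1 × Set.Ioi (0 : ℝ) => f p.2 :=
    hf.comp (measurable_subtype_coe.comp measurable_snd)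
  calc ∫⁻ x, f ‖x‖ ∂μ
      = ∫⁻ x : ({(0 : E)}ᶜ : Set E), f ‖(x : E)‖ ∂μ.comap (↑) := by
        rw [lintegral_subtype_comap (measurableSet_singleton 0).compl (fun x => f ‖x‖),
          restrict_compl_singleton]
    _ = ∫⁻ p, f p.2 ∂μ.toSphere.prod (Measure.volumeIoiPow (Module.finrank ℝ E - 1)) := by
        rw [← μ.measurePreserving_homeomorphUnitSphereProd.lintegral_comp hf']
        simp only [homeomorphUnitSphereProd_apply_snd_coe]
    _ = μ.toSphere Set.univ *
          ∫⁻ y : Set.Ioi (0 : ℝ), f y ∂Measure.volumeIoiPow (Module.finrank ℝ E - 1) := by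
        rw [lintegral_prod _ hf'.aemeasurable]
        simp [lintegral_const, mul_comm]
    _ = _ := by
        rw [Measure.toSphere_apply_univ, Measure.volumeIoiPow,
          lintegral_withDensity_eq_lintegral_mul _
            (measurable_subtype_coe.pow_const _).ennreal_ofReal
            (g := fun y : Set.Ioi (0 : ℝ) => f y) (hf.comp measurable_subtype_coe)]
        exact congrArg _ (lintegral_subtype_comap measurableSet_Ioi
          (fun y : ℝ => ENNReal.ofReal (y ^ (Module.finrank ℝ E - 1)) * f y))

end Polar

def expPartialSum (M : ℕ) (τ : ℝ) : ℝ := ∑ m ∈ range M, τ ^ m / m.factorial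

def erlangSurvival (M : ℕ) (τ : ℝ) : ℝ := Real.exp (-τ) * expPartialSum M τ

lemma hasDerivAt_expPartialSum_succ (M : ℕ) (τ : ℝ) :
    HasDerivAt (expPartialSum (M + 1)) (expPartialSum M τ) τ := by
  have h : HasDerivAt (expPartialSum (M + 1)) _ τ := HasDerivAt.fun_sum fun m _ =>
    (hasDerivAt_pow m τ).div_const (m.factorial : ℝ)
  refine h.congr_deriv ?_
  rw [sum_range_succ', expPartialSum]
  simp only [Nat.cast_zero, zero_mul, zero_div, add_zero]
  refine sum_congr rfl fun m _ => ?_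
  rw [Nat.factorial_succ, Nat.add_sub_cancel]
  push_cast
  field_simp

lemma hasDerivAt_erlangSurvival_succ (M : ℕ) (τ : ℝ) :
    HasDerivAt (erlangSurvival (M + 1)) (-(Real.exp (-τ) * τ ^ M / M.factorial)) τ := by
  have hexp : HasDerivAt (fun x : ℝ => Real.exp (-x)) (-Real.exp (-τ)) τ := by
    simpa using (hasDerivAt_neg τ).exp
  refine (hexp.mul (hasDerivAt_expPartialSum_succ M τ)).congr_deriv ?_
  rw [expPartialSum, expPartialSum, sum_range_succ]
  ring

lemma erlangSurvival_zero {M : ℕ} (hM : M ≠ 0) : erlangSurvival M 0 = 1 := by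
  obtain ⟨K, rfl⟩ := Nat.exists_eq_succ_of_ne_zero hM
  simp [erlangSurvival, expPartialSum, sum_range_succ']

lemma erlangSurvival_nonneg (M : ℕ) {τ : ℝ} (hτ : 0 ≤ τ) : 0 ≤ erlangSurvival M τ := by
  unfold erlangSurvival expPartialSum
  positivity

lemma erlangSurvival_le_one (M : ℕ) {τ : ℝ} (hτ : 0 ≤ τ) : erlangSurvival M τ ≤ 1 := by
  calc erlangSurvival M τ ≤ Real.exp (-τ) * Real.exp τ :=
        mul_le_mul_of_nonneg_left (Real.sum_le_exp_of_nonneg hτ M) (Real.exp_nonneg _)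
    _ = 1 := by rw [← Real.exp_add, neg_add_cancel, Real.exp_zero]

lemma integral_pow_mul_exp_neg_sq_div (M : ℕ) {σ2 : ℝ} (hσ : 0 < σ2) (r : ℝ) :
    ∫ y in (0 : ℝ)..r, y ^ (2 * M + 1) * Real.exp (-y ^ 2 / σ2) =
      M.factorial * σ2 ^ (M + 1) / 2 * (1 - erlangSurvival (M + 1) (r ^ 2 / σ2)) := by
  set Φ : ℝ → ℝ := fun y =>
    M.factorial * σ2 ^ (M + 1) / 2 * (1 - erlangSurvival (M + 1) (y ^ 2 / σ2))
  have hΦ (y : ℝ) : HasDerivAt Φ (y ^ (2 * M + 1) * Real.exp (-y ^ 2 / σ2)) y := by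
    have hsq : HasDerivAt (fun y : ℝ => y ^ 2 / σ2) (2 * y / σ2) y := by
      simpa using (hasDerivAt_pow 2 y).div_const σ2
    refine ((((hasDerivAt_erlangSurvival_succ M _).comp y hsq).const_sub 1).const_mul
      _).congr_deriv ?_
    rw [neg_div, div_pow, ← pow_mul]
    field_simp
    ring
  have hcont : Continuous fun y : ℝ => y ^ (2 * M + 1) * Real.exp (-y ^ 2 / σ2) := by fun_prop
  rw [intervalIntegral.integral_eq_sub_of_hasDerivAt (fun y _ => hΦ y)
    (hcont.intervalIntegrable 0 r)]
  simp [Φ, erlangSurvival_zero]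

lemma cscg_setOf_norm_sq_le (M : ℕ) [NeZero M] {σ2 : ℝ} (hσ : 0 < σ2) {t : ℝ} (ht : 0 ≤ t) :
    cscg M σ2 {v | ‖v‖ ^ 2 ≤ t} = ENNReal.ofReal (1 - erlangSurvival M (t / σ2)) := by
  obtain ⟨K, rfl⟩ : ∃ K, M = K + 1 := Nat.exists_eq_succ_of_ne_zero (NeZero.ne M)
  set c : ℝ := ((Real.pi * σ2) ^ (K + 1))⁻¹
  set F : ℝ := 1 - erlangSurvival (K + 1) (t / σ2)
  have hset : {v : EuclideanSpace ℂ (Fin (K + 1)) | ‖v‖ ^ 2 ≤ t} = (‖·‖) ⁻¹' Set.Iic √t := by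
    ext v
    simp [Real.le_sqrt (norm_nonneg v) ht]
  have hmeas : MeasurableSet {v : EuclideanSpace ℂ (Fin (K + 1)) | ‖v‖ ^ 2 ≤ t} :=
    hset ▸ measurable_norm measurableSet_Iic
  set D : ℝ → ENNReal :=
    (Set.Iic √t).indicator fun y => ENNReal.ofReal (c * Real.exp (-y ^ 2 / σ2))
  have hD : Measurable D := Measurable.indicator (by fun_prop) measurableSet_Iic
  have hradial : ∫⁻ y in Set.Ioi 0, ENNReal.ofReal (y ^ (2 * K + 1)) * D y =
      ENNReal.ofReal (c * (K.factorial * σ2 ^ (K + 1) / 2 * F)) := by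
    simp_rw [D, ← Set.indicator_mul_right _ (fun y => ENNReal.ofReal (y ^ (2 * K + 1)))]
    rw [lintegral_indicator measurableSet_Iic, Measure.restrict_restrict measurableSet_Iic,
      Set.Iic_inter_Ioi,
      show F = 1 - erlangSurvival (K + 1) (√t ^ 2 / σ2) by rw [Real.sq_sqrt ht],
      ← integral_pow_mul_exp_neg_sq_div K hσ, ← intervalIntegral.integral_const_mul,
      intervalIntegral.integral_of_le (Real.sqrt_nonneg t),
      ofReal_integral_eq_lintegral_ofReal]
    · refine setLIntegral_congr_fun measurableSet_Ioc fun y hy => ?_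
      rw [← ENNReal.ofReal_mul (pow_nonneg hy.1.le _), mul_left_comm]
    · exact (by fun_prop : Continuous fun y : ℝ =>
        c * (y ^ (2 * K + 1) * Real.exp (-y ^ 2 / σ2))).integrableOn_Ioc
    · filter_upwards [ae_restrict_mem measurableSet_Ioc] with y hy
      have := hy.1.le
      positivity
  calc cscg (K + 1) σ2 {v | ‖v‖ ^ 2 ≤ t} = ∫⁻ v, D ‖v‖ := by
        rw [cscg, withDensity_apply _ hmeas, ← lintegral_indicator hmeas, hset]
        rfl
    _ = (2 * (K + 1) : ℕ) * ENNReal.ofReal (Real.pi ^ (K + 1) / (K + 1).factorial) *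
          ENNReal.ofReal (c * (K.factorial * σ2 ^ (K + 1) / 2 * F)) := by
        rw [lintegral_fun_norm_addHaar _ hD, finrank_real_euclideanSpace_complex, Fintype.card_fin,
          volume_ball_euclideanSpace_complex, show 2 * (K + 1) - 1 = 2 * K + 1 by omega, hradial]
    _ = ENNReal.ofReal F := by
        rw [← ENNReal.ofReal_natCast, ← ENNReal.ofReal_mul (by positivity),
          ← ENNReal.ofReal_mul (by positivity)]
        congr 1
        simp only [c, Nat.factorial_succ, mul_pow]
        push_cast
        field_simp

lemma measure_lt_sup'_of_iIndepFun {Ω β ι : Type*} [MeasurableSpace Ω] [MeasurableSpace β]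
    [Fintype ι] [Nonempty ι] {μ : Measure Ω} [IsProbabilityMeasure μ] {ν : Measure β}
    {v : ι → Ω → β} (hmeas : ∀ n, Measurable (v n)) (hindep : iIndepFun v μ)
    (hlaw : ∀ n, μ.map (v n) = ν) {f : β → ℝ} (hf : Measurable f) (t : ℝ) :
    μ {ω | t < univ.sup' univ_nonempty fun n => f (v n ω)} =
      1 - ν {x | f x ≤ t} ^ Fintype.card ι := by
  have hs : MeasurableSet {x | f x ≤ t} := measurableSet_le hf measurable_const
  have hle : {ω | univ.sup' univ_nonempty (fun n => f (v n ω)) ≤ t} =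
      ⋂ n, v n ⁻¹' {x | f x ≤ t} := by
    ext ω
    simp
  have hmeas_le : MeasurableSet {ω | univ.sup' univ_nonempty (fun n => f (v n ω)) ≤ t} :=
    hle ▸ MeasurableSet.iInter fun n => hmeas n hs
  rw [show {ω | t < univ.sup' univ_nonempty fun n => f (v n ω)} =
      {ω | univ.sup' univ_nonempty (fun n => f (v n ω)) ≤ t}ᶜ by ext; simp,
    prob_compl_eq_one_sub hmeas_le, hle, hindep.meas_iInter fun n => ⟨_, hs, rfl⟩]
  simp_rw [← Measure.map_apply (hmeas _) hs, hlaw, prod_const, card_univ]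

lemma integral_eq_integral_Ioi_of_meas_lt {Ω : Type*} [MeasurableSpace Ω] {μ : Measure Ω}
    {X : Ω → ℝ} (hX0 : ∀ ω, 0 ≤ X ω) (hX : Measurable X) {g : ℝ → ℝ}
    (hg : IntegrableOn g (Set.Ioi 0)) (hg0 : ∀ t ∈ Set.Ioi (0 : ℝ), 0 ≤ g t)
    (htail : ∀ t ∈ Set.Ioi (0 : ℝ), μ {ω | t < X ω} = ENNReal.ofReal (g t)) :
    ∫ ω, X ω ∂μ = ∫ t in Set.Ioi 0, g t := by
  rw [integral_eq_lintegral_of_nonneg_ae (.of_forall hX0) hX.aestronglyMeasurable,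
    lintegral_eq_lintegral_meas_lt μ (.of_forall hX0) hX.aemeasurable,
    setLIntegral_congr_fun measurableSet_Ioi htail,
    ← ofReal_integral_eq_lintegral_ofReal hg (ae_restrict_of_forall_mem measurableSet_Ioi hg0),
    ENNReal.toReal_ofReal (setIntegral_nonneg measurableSet_Ioi hg0)]

lemma one_sub_one_sub_pow {R : Type*} [CommRing R] (s : R) (N : ℕ) :
    1 - (1 - s) ^ N = ∑ n ∈ Icc 1 N, (N.choose n : R) * (-1) ^ (n + 1) * s ^ n := by
  rw [sub_eq_neg_add 1 s, add_pow, range_eq_Ico, sum_eq_sum_Ico_succ_bot N.succ_pos, zero_add,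
    Nat.succ_eq_add_one, Finset.Ico_add_one_right_eq_Icc]
  simp only [pow_zero, one_pow, mul_one, Nat.choose_zero_right, Nat.cast_one,
    sub_add_cancel_left, ← sum_neg_distrib]
  refine sum_congr rfl fun n _ => ?_
  rw [neg_pow]
  ring

lemma integrableOn_Ioi_pow_mul_exp_neg_mul (k : ℕ) {b : ℝ} (hb : 0 < b) :
    IntegrableOn (fun τ : ℝ => τ ^ k * Real.exp (-(b * τ))) (Set.Ioi 0) := by
  simpa [Real.rpow_natCast] using integrableOn_rpow_mul_exp_neg_mul_rpow (s := k) (p := 1)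
    (neg_one_lt_zero.trans_le k.cast_nonneg) one_pos hb

lemma integral_Ioi_pow_mul_exp_neg_mul (k : ℕ) {b : ℝ} (hb : 0 < b) :
    ∫ τ in Set.Ioi 0, τ ^ k * Real.exp (-(b * τ)) = k.factorial / b ^ (k + 1) := by
  have h := Real.integral_rpow_mul_exp_neg_mul_Ioi (a := k + 1) (by positivity) hb
  rw [add_sub_cancel_right, Real.Gamma_nat_eq_factorial, ← Nat.cast_succ] at h
  simp only [Real.rpow_natCast] at h
  rw [h, one_div, inv_pow, inv_mul_eq_div]

lemma erlangSurvival_pow (M n : ℕ) (τ : ℝ) :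
    erlangSurvival M τ ^ n = ∑ k ∈ Nat.antidiagonalTuple M n,
      (Nat.multinomial univ k : ℝ) * (∏ m : Fin M, (1 : ℝ) / ((m : ℕ).factorial ^ k m : ℕ)) *
        (τ ^ (∑ m : Fin M, (m : ℕ) * k m) * Real.exp (-(n * τ))) := by
  rw [erlangSurvival, expPartialSum, mul_pow, ← Real.exp_nat_mul, sum_range,
    sum_pow_eq_sum_piAntidiag, piAntidiag_univ_fin_eq_antidiagonalTuple, mul_sum]
  refine sum_congr rfl fun k _ => ?_
  rw [← prod_pow_eq_pow_sum, mul_neg]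
  simp only [div_pow, ← pow_mul, one_div, prod_div_distrib, Nat.cast_pow, prod_inv_distrib]
  ring

lemma integrableOn_erlangSurvival_pow (M : ℕ) {n : ℕ} (hn : 0 < n) :
    IntegrableOn (fun τ => erlangSurvival M τ ^ n) (Set.Ioi 0) := by
  simp_rw [erlangSurvival_pow]
  exact integrable_finsetSum _ fun k _ =>
    (integrableOn_Ioi_pow_mul_exp_neg_mul _ (Nat.cast_pos.2 hn)).const_mul _

lemma integral_erlangSurvival_pow (M : ℕ) {n : ℕ} (hn : 0 < n) :
    ∫ τ in Set.Ioi 0, erlangSurvival M τ ^ n = ccoef M n := by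
  have hb : (0 : ℝ) < n := Nat.cast_pos.2 hn
  simp_rw [erlangSurvival_pow]
  rw [integral_finsetSum _ fun k _ => (integrableOn_Ioi_pow_mul_exp_neg_mul _ hb).const_mul _,
    ccoef]
  refine sum_congr rfl fun k _ => ?_
  rw [integral_const_mul, integral_Ioi_pow_mul_exp_neg_mul _ hb, add_comm 1]

lemma integrableOn_one_sub_one_sub_erlangSurvival_pow (M N : ℕ) :
    IntegrableOn (fun τ => 1 - (1 - erlangSurvival M τ) ^ N) (Set.Ioi 0) := by
  simp_rw [one_sub_one_sub_pow]
  exact integrable_finsetSum _ fun n hn =>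
    (integrableOn_erlangSurvival_pow M (mem_Icc.1 hn).1).const_mul _

lemma integral_one_sub_one_sub_erlangSurvival_pow (M N : ℕ) :
    ∫ τ in Set.Ioi 0, (1 - (1 - erlangSurvival M τ) ^ N) = Gfun N M := by
  simp_rw [one_sub_one_sub_pow]
  rw [integral_finsetSum _ fun n hn =>
    (integrableOn_erlangSurvival_pow M (mem_Icc.1 hn).1).const_mul _, Gfun]
  refine sum_congr rfl fun n hn => ?_
  rw [integral_const_mul, integral_erlangSurvival_pow M (mem_Icc.1 hn).1]

/-- If `v 1, …, v N₁` are i.i.d. `CN(0, σ² I_M)` random vectors, then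
`E[max_n ‖v n‖²] = σ² G(N₁, M)`. -/
theorem stmt5 {Ω : Type*} [MeasureSpace Ω] [IsProbabilityMeasure (ℙ : Measure Ω)]
    (M N1 : ℕ) [NeZero N1] (hM : 1 ≤ M) (σ2 : ℝ) (hσ : 0 < σ2)
    (v : Fin N1 → Ω → EuclideanSpace ℂ (Fin M))
    (hmeas : ∀ n, Measurable (v n))
    (hindep : iIndepFun v ℙ)
    (hlaw : ∀ n, Measure.map (v n) ℙ = cscg M σ2) :
    (∫ ω, Finset.univ.sup' Finset.univ_nonempty (fun n => ‖v n ω‖ ^ 2)) =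
      σ2 * Gfun N1 M := by
  have : NeZero M := ⟨by omega⟩
  set g : ℝ → ℝ := fun τ => 1 - (1 - erlangSurvival M τ) ^ N1
  have hF {τ : ℝ} (hτ : 0 ≤ τ) : 0 ≤ 1 - erlangSurvival M τ :=
    sub_nonneg.2 (erlangSurvival_le_one M hτ)
  have hg0 {τ : ℝ} (hτ : 0 ≤ τ) : 0 ≤ g τ :=
    sub_nonneg.2 (pow_le_one₀ (hF hτ) (by linarith [erlangSurvival_nonneg M hτ]))
  have htail (t : ℝ) (ht : t ∈ Set.Ioi 0) :
      ℙ {ω | t < univ.sup' univ_nonempty fun n => ‖v n ω‖ ^ 2} = ENNReal.ofReal (g (t * σ2⁻¹)) := by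
    have hτ : 0 ≤ t / σ2 := div_nonneg ht.out.le hσ.le
    rw [measure_lt_sup'_of_iIndepFun hmeas hindep hlaw (measurable_norm.pow_const 2),
      cscg_setOf_norm_sq_le M hσ ht.out.le, Fintype.card_fin, ← div_eq_mul_inv,
      ENNReal.ofReal_sub _ (pow_nonneg (hF hτ) _), ENNReal.ofReal_one, ENNReal.ofReal_pow (hF hτ)]
  have hX0 (ω : Ω) : 0 ≤ univ.sup' univ_nonempty fun n => ‖v n ω‖ ^ 2 :=
    le_sup'_of_le _ (mem_univ 0) (sq_nonneg _)
  rw [integral_eq_integral_Ioi_of_meas_lt hX0 (by fun_prop)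
      ((integrableOn_Ioi_comp_mul_right_iff g 0 (inv_pos.2 hσ)).2 ?_)
      (fun t ht => hg0 (mul_nonneg ht.out.le (inv_nonneg.2 hσ.le))) htail,
    integral_comp_mul_right_Ioi g 0 (inv_pos.2 hσ), zero_mul, inv_inv, smul_eq_mul,
    integral_one_sub_one_sub_erlangSurvival_pow]
  simpa using integrableOn_one_sub_one_sub_erlangSurvival_pow M N1
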